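/- arXiv:2112.11173 — 2 statements merged into one kernel-verified Lean document; each statement's English description precedes it below -/
import Mathlib

section
/- Let r > 0 and let g : [0, r] → ℝ be measurable with 0 ≤ g ≤ 1. Then (∫₀^r g(s) ds)² ≤ 2 ∫₀^r g(t)·t dt. -/
/-!
Put `A = ∫_{(a,b]} g`. For `s ∈ (a,b]` split `A = ∫_{(a,s]} g + ∫_{(s,b]} g`; the first piece is
at most `s - a` because `g ≤ 1`, and using `g(s) ≤ 1` in front of the second piece gives
`g(s) A ≤ g(s)(s - a) + ∫_{(s,b]} g`. Integrating in `s`, `A² = ∫ g(s) A ds` is bounded by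
`∫ g(s)(s - a) ds` plus the integral of `g(t)` over the triangle `a < s < t ≤ b`, which by
Fubini is `∫ g(t)(t - a) dt` again.
-/

open MeasureTheory Set
open scoped ENNReal

variable {g : ℝ → ℝ} {a b : ℝ}

theorem setIntegral_le_measureReal_of_le_one {α : Type*} [MeasurableSpace α] {μ : Measure α}
    {s : Set α} {f : α → ℝ} (hs : μ s ≠ ∞) (hf0 : ∀ x ∈ s, 0 ≤ f x) (hf1 : ∀ x ∈ s, f x ≤ 1) :
    ∫ x in s, f x ∂μ ≤ μ.real s := by
  have hnorm : ∀ x ∈ s, ‖f x‖ ≤ 1 := fun x hx => by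
    rw [Real.norm_of_nonneg (hf0 x hx)]; exact hf1 x hx
  calc ∫ x in s, f x ∂μ ≤ ‖∫ x in s, f x ∂μ‖ := Real.le_norm_self _
    _ ≤ 1 * μ.real s := norm_setIntegral_le_of_norm_le_const hs.lt_top hnorm
    _ = μ.real s := one_mul _

theorem setIntegral_Ioc_setIntegral_Ioc_eq_mul_sub (hg : IntegrableOn g (Ioc a b)) :
    ∫ s in Ioc a b, ∫ t in Ioc s b, g t = ∫ t in Ioc a b, g t * (t - a) := by
  set μ := volume.restrict (Ioc a b)
  let F : ℝ → ℝ → ℝ := fun s t => (Ioi s).indicator g t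
  have hF : Integrable (Function.uncurry F) (μ.prod μ) :=
    (hg.comp_snd μ).indicator (measurableSet_lt measurable_fst measurable_snd)
  calc ∫ s in Ioc a b, ∫ t in Ioc s b, g t = ∫ s, ∫ t, F s t ∂μ ∂μ := by
        refine setIntegral_congr_fun measurableSet_Ioc fun s hs => ?_
        rw [integral_indicator measurableSet_Ioi, Measure.restrict_restrict measurableSet_Ioi,
          inter_comm, Ioc_inter_Ioi, sup_eq_right.2 hs.1.le]
    _ = ∫ t, ∫ s, F s t ∂μ ∂μ := integral_integral_swap hF
    _ = ∫ t in Ioc a b, g t * (t - a) := by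
        refine setIntegral_congr_fun measurableSet_Ioc fun t ht => ?_
        have hslice : (fun s => F s t) = (Iio t).indicator fun _ => g t := by
          ext s; simp [F, indicator_apply]
        have hcut : Iio t ∩ Ioc a b = Ioo a t := by
          ext s; simp only [mem_inter_iff, mem_Iio, mem_Ioc, mem_Ioo]
          constructor
          · rintro ⟨hst, has, -⟩; exact ⟨has, hst⟩
          · rintro ⟨has, hst⟩; exact ⟨hst, has, hst.le.trans ht.2⟩
        rw [hslice, integral_indicator_const _ measurableSet_Iio,
          measureReal_restrict_apply measurableSet_Iio, hcut, Real.volume_real_Ioo_of_le ht.1.le,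
          smul_eq_mul, mul_comm]

theorem integrableOn_setIntegral_Ioc (hab : a ≤ b) (hg : IntegrableOn g (Ioc a b)) :
    IntegrableOn (fun s => ∫ t in Ioc s b, g t) (Ioc a b) := by
  have hcont : ContinuousOn (fun s => ∫ t in s..b, g t) (Icc a b) := by
    rw [← uIcc_of_le hab]
    refine intervalIntegral.continuousOn_primitive_interval_left ?_
    rwa [uIcc_of_le hab, integrableOn_Icc_iff_integrableOn_Ioc]
  refine (hcont.integrableOn_Icc.mono_set Ioc_subset_Icc_self).congr_fun (fun s hs => ?_)
    measurableSet_Ioc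
  exact intervalIntegral.integral_of_le hs.2

theorem mul_setIntegral_Ioc_le (hg : IntegrableOn g (Ioc a b)) (hg0 : ∀ t ∈ Ioc a b, 0 ≤ g t)
    (hg1 : ∀ t ∈ Ioc a b, g t ≤ 1) {s : ℝ} (hs : s ∈ Ioc a b) :
    g s * ∫ t in Ioc a b, g t ≤ g s * (s - a) + ∫ t in Ioc s b, g t := by
  have hsplit : ∫ t in Ioc a b, g t = (∫ t in Ioc a s, g t) + ∫ t in Ioc s b, g t := by
    rw [← Ioc_union_Ioc_eq_Ioc hs.1.le hs.2,
      setIntegral_union (Ioc_disjoint_Ioc_of_le le_rfl) measurableSet_Ioc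
        (hg.mono_set (Ioc_subset_Ioc_right hs.2)) (hg.mono_set (Ioc_subset_Ioc_left hs.1.le))]
  have hhead : ∫ t in Ioc a s, g t ≤ s - a := by
    rw [← Real.volume_real_Ioc_of_le hs.1.le]
    exact setIntegral_le_measureReal_of_le_one measure_Ioc_lt_top.ne
      (fun t ht => hg0 t ⟨ht.1, ht.2.trans hs.2⟩) (fun t ht => hg1 t ⟨ht.1, ht.2.trans hs.2⟩)
  have htail : 0 ≤ ∫ t in Ioc s b, g t :=
    setIntegral_nonneg measurableSet_Ioc fun t ht => hg0 t ⟨hs.1.trans ht.1, ht.2⟩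
  rw [hsplit, mul_add]
  exact add_le_add (mul_le_mul_of_nonneg_left hhead (hg0 s hs))
    (mul_le_of_le_one_left htail (hg1 s hs))

theorem sq_setIntegral_Ioc_le (hab : a ≤ b) (hg : IntegrableOn g (Ioc a b))
    (hg0 : ∀ t ∈ Ioc a b, 0 ≤ g t) (hg1 : ∀ t ∈ Ioc a b, g t ≤ 1) :
    (∫ t in Ioc a b, g t) ^ 2 ≤ 2 * ∫ t in Ioc a b, g t * (t - a) := by
  set A := ∫ t in Ioc a b, g t
  have hgIcc : IntegrableOn g (Icc a b) := by rwa [integrableOn_Icc_iff_integrableOn_Ioc]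
  have hweight : IntegrableOn (fun t => g t * (t - a)) (Ioc a b) :=
    (hgIcc.mul_continuousOn (by fun_prop) isCompact_Icc).mono_set Ioc_subset_Icc_self
  have htail := integrableOn_setIntegral_Ioc hab hg
  calc A ^ 2 = ∫ s in Ioc a b, g s * A := by rw [integral_mul_const, sq]
    _ ≤ ∫ s in Ioc a b, (g s * (s - a) + ∫ t in Ioc s b, g t) :=
        setIntegral_mono_on (hg.mul_const A) (hweight.add htail) measurableSet_Ioc
          fun s hs => mul_setIntegral_Ioc_le hg hg0 hg1 hs
    _ = 2 * ∫ t in Ioc a b, g t * (t - a) := by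
        rw [integral_add hweight htail, setIntegral_Ioc_setIntegral_Ioc_eq_mul_sub hg]
        ring

/-- One-dimensional slicing estimate: for measurable `0 ≤ g ≤ 1` on `[0,r]`,
`(∫₀^r g)² ≤ 2 ∫₀^r g(t)·t dt`. -/
theorem stmt_4 (r : ℝ) (hr : 0 < r) (g : ℝ → ℝ) (hg : Measurable g)
    (hg0 : ∀ s ∈ Set.Icc 0 r, 0 ≤ g s) (hg1 : ∀ s ∈ Set.Icc 0 r, g s ≤ 1) :
    (∫ s in (0:ℝ)..r, g s) ^ 2 ≤ 2 * ∫ t in (0:ℝ)..r, g t * t := by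
  have hg0' : ∀ t ∈ Ioc 0 r, 0 ≤ g t := fun t ht => hg0 t (Ioc_subset_Icc_self ht)
  have hg1' : ∀ t ∈ Ioc 0 r, g t ≤ 1 := fun t ht => hg1 t (Ioc_subset_Icc_self ht)
  have hint : IntegrableOn g (Ioc 0 r) :=
    Measure.integrableOn_of_bounded (M := 1) measure_Ioc_lt_top.ne hg.aestronglyMeasurable
      (ae_restrict_of_forall_mem measurableSet_Ioc fun t ht => by
        rw [Real.norm_of_nonneg (hg0' t ht)]; exact hg1' t ht)
  simpa [intervalIntegral.integral_of_le hr.le] using sq_setIntegral_Ioc_le hr.le hint hg0' hg1'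
end

section
/- Let W : ℝ → [0, ∞) be continuous with W(1) = W(−1) = 0 and W > 0 on (−1, 1), and assume there is K > 0 with W(s) ≤ K·(1 − s)² for s ∈ [0, 1] and W(s) ≤ K·(1 + s)² for s ∈ [−1, 0]. Let θ : ℝ → ℝ be differentiable with θ(0) = 0 and θ'(t) = √(2·W(θ(t))) for all t ∈ ℝ. Then θ(t) ∈ (−1, 1) for all t ∈ ℝ, and θ is strictly increasing. -/
/-!
Since `θ' = √(2 W(θ)) ≥ 0`, `θ` is monotone. If `θ` reached `1` at some `T > 0`, then on `[0, T]`
the quadratic bound gives `θ' ≤ √(2K) (1 - θ)`, so `(1 - θ t) e^{√(2K) t}` is nondecreasing there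
and cannot drop from `1` to `0`. The well `-1` is handled by the reflection `t ↦ -θ (-t)`.
Inside `(-1, 1)` the potential is positive, hence `θ' > 0` and `θ` is strictly increasing.
-/

section

open Set Real

theorem lt_of_hasDerivAt_le_mul_sub {f f' : ℝ → ℝ} {a b c m : ℝ} (hab : a ≤ b)
    (hf : ContinuousOn f (Icc a b)) (hf' : ∀ t ∈ Ioo a b, HasDerivAt f (f' t) t)
    (hbound : ∀ t ∈ Ioo a b, f' t ≤ c * (m - f t)) (ha : f a < m) : f b < m := by
  set g : ℝ → ℝ := fun t => (m - f t) * exp (c * t)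
  have hg_mono : MonotoneOn g (Icc a b) := by
    refine monotoneOn_of_hasDerivWithinAt_nonneg
      (f' := fun t => exp (c * t) * (c * (m - f t) - f' t)) (convex_Icc a b)
      ((continuousOn_const.sub hf).mul (by fun_prop)) (fun t ht => ?_) (fun t ht => ?_)
      <;> rw [interior_Icc] at ht
    · have hexp : HasDerivAt (fun t => exp (c * t)) (exp (c * t) * c) t := by
        simpa using ((hasDerivAt_id t).const_mul c).exp
      exact (((hasDerivAt_const t m).sub (hf' t ht)).mul hexp).hasDerivWithinAt.congr_deriv
        (by simp only [Pi.sub_apply]; ring)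
    · exact mul_nonneg (exp_pos _).le (sub_nonneg.2 (hbound t ht))
  have hg : g a ≤ g b := hg_mono (left_mem_Icc.2 hab) (right_mem_Icc.2 hab) hab
  have hgb : 0 < (m - f b) * exp (c * b) := (mul_pos (sub_pos.2 ha) (exp_pos _)).trans_le hg
  exact sub_pos.1 (pos_of_mul_pos_left hgb (exp_pos _).le)

theorem sqrt_two_mul_le_of_le_mul_sq {x K y : ℝ} (hx : x ≤ K * y ^ 2) (hy : 0 ≤ y) :
    √(2 * x) ≤ √(2 * K) * y :=
  calc √(2 * x) ≤ √(2 * K * y ^ 2) := sqrt_le_sqrt (by linarith)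
    _ = √(2 * K) * y := by rw [sqrt_mul' _ (sq_nonneg y), sqrt_sq hy]

theorem lt_one_of_hasDerivAt_sqrt {W θ : ℝ → ℝ} {K : ℝ}
    (hWq : ∀ s ∈ Icc (0 : ℝ) 1, W s ≤ K * (1 - s) ^ 2) (hθ0 : θ 0 = 0)
    (hθ' : ∀ t, HasDerivAt θ (√(2 * W (θ t))) t) (t : ℝ) : θ t < 1 := by
  have hmono : Monotone θ := monotone_of_hasDerivAt_nonneg hθ' fun _ => sqrt_nonneg _
  have hcont : Continuous θ := continuous_iff_continuousAt.2 fun t => (hθ' t).continuousAt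
  by_contra! ht
  have ht0 : 0 ≤ t := by
    by_contra! h
    linarith [hmono h.le]
  obtain ⟨T, hT, hθT⟩ : ∃ T ∈ Icc 0 t, θ T = 1 :=
    intermediate_value_Icc ht0 hcont.continuousOn ⟨by rw [hθ0]; norm_num, ht⟩
  have hbound : ∀ s ∈ Ioo 0 T, √(2 * W (θ s)) ≤ √(2 * K) * (1 - θ s) := by
    intro s hs
    have hθs : θ s ∈ Icc (0 : ℝ) 1 :=
      ⟨hθ0 ▸ hmono hs.1.le, hθT ▸ hmono hs.2.le⟩
    exact sqrt_two_mul_le_of_le_mul_sq (hWq _ hθs) (sub_nonneg.2 hθs.2)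
  have hθT_lt : θ T < 1 := lt_of_hasDerivAt_le_mul_sub hT.1 hcont.continuousOn
    (fun s _ => hθ' s) hbound (by rw [hθ0]; norm_num)
  exact hθT_lt.ne hθT

theorem neg_one_lt_of_hasDerivAt_sqrt {W θ : ℝ → ℝ} {K : ℝ}
    (hWq : ∀ s ∈ Icc (-1 : ℝ) 0, W s ≤ K * (1 + s) ^ 2) (hθ0 : θ 0 = 0)
    (hθ' : ∀ t, HasDerivAt θ (√(2 * W (θ t))) t) (t : ℝ) : -1 < θ t := by
  have hWq_neg : ∀ s ∈ Icc (0 : ℝ) 1, W (-s) ≤ K * (1 - s) ^ 2 := fun s hs => by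
    simpa [sub_eq_add_neg] using hWq (-s) ⟨by linarith [hs.2], by linarith [hs.1]⟩
  have hθ'_refl : ∀ t, HasDerivAt (fun t => -θ (-t)) (√(2 * W (-(-θ (-t))))) t := fun t => by
    rw [neg_neg]
    exact ((hθ' (-t)).scomp t (hasDerivAt_neg t)).neg.congr_deriv (by simp)
  have := lt_one_of_hasDerivAt_sqrt hWq_neg (by simp [hθ0]) hθ'_refl (-t)
  simp only [neg_neg] at this
  linarith

end

theorem stmt_15_general (W : ℝ → ℝ)
    (hWpos : ∀ s ∈ Set.Ioo (-1:ℝ) 1, 0 < W s)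
    (K : ℝ)
    (hWq1 : ∀ s ∈ Set.Icc (0:ℝ) 1, W s ≤ K * (1 - s) ^ 2)
    (hWqm1 : ∀ s ∈ Set.Icc (-1:ℝ) 0, W s ≤ K * (1 + s) ^ 2)
    (θ : ℝ → ℝ) (hθ0 : θ 0 = 0)
    (hθ' : ∀ t : ℝ, HasDerivAt θ (Real.sqrt (2 * W (θ t))) t) :
    (∀ t : ℝ, θ t ∈ Set.Ioo (-1:ℝ) 1) ∧ StrictMono θ := by
  have hθ_mem : ∀ t, θ t ∈ Set.Ioo (-1 : ℝ) 1 := fun t =>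
    ⟨neg_one_lt_of_hasDerivAt_sqrt hWqm1 hθ0 hθ' t, lt_one_of_hasDerivAt_sqrt hWq1 hθ0 hθ' t⟩
  exact ⟨hθ_mem, strictMono_of_hasDerivAt_pos hθ' fun t =>
    Real.sqrt_pos.2 (mul_pos two_pos (hWpos _ (hθ_mem t)))⟩

/-- The optimal transition profile stays strictly between the wells and is
strictly increasing. -/
theorem stmt_15 (W : ℝ → ℝ) (hW : Continuous W) (hWnn : ∀ s, 0 ≤ W s)
    (hW1 : W 1 = 0) (hWm1 : W (-1) = 0)
    (hWpos : ∀ s ∈ Set.Ioo (-1:ℝ) 1, 0 < W s)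
    (K : ℝ) (hK : 0 < K)
    (hWq1 : ∀ s ∈ Set.Icc (0:ℝ) 1, W s ≤ K * (1 - s) ^ 2)
    (hWqm1 : ∀ s ∈ Set.Icc (-1:ℝ) 0, W s ≤ K * (1 + s) ^ 2)
    (θ : ℝ → ℝ) (hθ0 : θ 0 = 0)
    (hθ' : ∀ t : ℝ, HasDerivAt θ (Real.sqrt (2 * W (θ t))) t) :
    (∀ t : ℝ, θ t ∈ Set.Ioo (-1:ℝ) 1) ∧ StrictMono θ :=
  stmt_15_general W hWpos K hWq1 hWqm1 θ hθ0 hθ'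
end
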